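/- Let G be a finite group that is S-nilpotent of S-nilpotence class c for a supercharacter theory S. Then ζ_{c-1}(S) ≤ V(S). -/

import Mathlib

open scoped BigOperators Pointwise

/-- `f : G → ℂ` is an irreducible character of `G`. -/
def IsIrrChar (G : Type) [Group G] [Fintype G] (f : G → ℂ) : Prop :=
  ∃ V : FDRep ℂ G, CategoryTheory.Simple V ∧ V.character = f

/-- A supercharacter theory of a finite group `G` (Diaconis–Isaacs): a partition
`parts` of the set of irreducible characters of `G` together with a partition of `G`
into `S`-classes (`cls g` is the class of `g`), such that `{1}` is a class, the number
of parts equals the number of classes, and each supercharacter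
`σ_X = ∑ χ ∈ X, χ(1)·χ` is constant on every class. -/
structure SCT (G : Type) [Group G] [Fintype G] where
  parts : Finset (Finset (G → ℂ))
  cls : G → Set G
  parts_cover : ∀ f : G → ℂ, IsIrrChar G f ↔ ∃ X ∈ parts, f ∈ X
  parts_disj : ∀ X ∈ parts, ∀ Y ∈ parts, X ≠ Y → Disjoint X Y
  parts_nonempty : ∀ X ∈ parts, X.Nonempty
  mem_cls : ∀ g : G, g ∈ cls g
  cls_eq : ∀ g h : G, h ∈ cls g → cls h = cls g
  cls_one : cls (1 : G) = {1}
  card_eq : parts.card = Nat.card (Set.range cls)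
  const : ∀ X ∈ parts, ∀ g h : G, h ∈ cls g →
    (∑ χ ∈ X, χ 1 * χ h) = (∑ χ ∈ X, χ 1 * χ g)

variable {G : Type} [Group G] [Fintype G]

namespace SCT

/-- The supercharacter attached to a part `X`. -/
noncomputable def superchar (_S : SCT G) (X : Finset (G → ℂ)) : G → ℂ := fun g => ∑ χ ∈ X, χ 1 * χ g

/-- The set `Irr(S)` of `S`-characters. -/
def Irr (S : SCT G) : Set (G → ℂ) := {f | ∃ X ∈ S.parts, f = S.superchar X}

end SCT

/-- The kernel of a character-like function `f : G → ℂ`. -/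
def charKer (f : G → ℂ) : Subgroup G where
  carrier := {g | ∀ h, f (g * h) = f h}
  one_mem' := by intro h; simp
  mul_mem' := by intro a b ha hb h; rw [mul_assoc, ha, hb]
  inv_mem' := by
    intro a ha h
    have := ha (a⁻¹ * h)
    rw [mul_inv_cancel_left] at this
    exact this.symm

namespace SCT

/-- `[H,S]`, the subgroup generated by the `g⁻¹k` with `g ∈ H`, `k ∈ Cl_S(g)`. -/
def comm (S : SCT G) (H : Subgroup G) : Subgroup G :=
  Subgroup.closure {x | ∃ g ∈ H, ∃ k ∈ S.cls g, x = g⁻¹ * k}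

/-- `[G,S]`. -/
def derived (S : SCT G) : Subgroup G := S.comm ⊤

/-- `Irr(S | N)`: the `S`-characters whose kernel does not contain `N`. -/
def IrrRel (S : SCT G) (N : Subgroup G) : Set (G → ℂ) :=
  {f | f ∈ S.Irr ∧ ¬ N ≤ charKer f}

/-- `g` is an `S`-Camina element: all of `Irr(S | [G,S])` vanishes at `g`. -/
def IsCaminaElt (S : SCT G) (g : G) : Prop :=
  ∀ f ∈ S.IrrRel S.derived, f g = 0

/-- `N` is `S`-normal: a union of `S`-classes. -/
def IsNormal (S : SCT G) (N : Subgroup G) : Prop :=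
  ∀ g ∈ N, S.cls g ⊆ N

/-- `(G,N)` is a generalised `S`-Camina pair. -/
def IsGCP (S : SCT G) (N : Subgroup G) : Prop :=
  S.IsNormal N ∧ ∀ g : G, g ∉ N → S.IsCaminaElt g

/-- The set `Z(S)` of elements with singleton `S`-class. -/
def centerSet (S : SCT G) : Set G := {g | S.cls g = {g}}

/-- The vanishing-off subgroup `V(S | N)`. -/
def V (S : SCT G) (N : Subgroup G) : Subgroup G :=
  Subgroup.closure {g | ∃ f ∈ S.IrrRel N, f g ≠ 0}

/-- `V(S) = V(S | [G,S])`. -/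
def VS (S : SCT G) : Subgroup G := S.V S.derived

/-- `U(S | N)`: the product of all `S`-normal subgroups `H` with `V(S | H) ≤ N`. -/
def U (S : SCT G) (N : Subgroup G) : Subgroup G :=
  ⨆ (H : Subgroup G) (_ : S.IsNormal H ∧ S.V H ≤ N), H

/-- The upper `S`-central series: `ζ_0 = 1` and `ζ_{i+1}/ζ_i = Z(S^{G/ζ_i})`,
i.e. `ζ_{i+1}` consists of the `g` whose `S`-class maps onto the single coset `gζ_i`. -/
def zeta (S : SCT G) : ℕ → Subgroup G
  | 0 => ⊥
  | i + 1 => Subgroup.closure {g | ∀ k ∈ S.cls g, g⁻¹ * k ∈ S.zeta i}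

/-- The lower `S`-central series `γ_1 = G`, `γ_{i+1} = [γ_i, S]` (with `γ_0 := G`). -/
def gamma (S : SCT G) : ℕ → Subgroup G
  | 0 => ⊤
  | 1 => ⊤
  | n + 2 => S.comm (S.gamma (n + 1))

/-- The series `V_1(S) = V(S)`, `V_{i+1}(S) = [V_i(S), S]` (with `V_0 := V(S)`). -/
def Vseq (S : SCT G) : ℕ → Subgroup G
  | 0 => S.VS
  | 1 => S.VS
  | n + 2 => S.comm (S.Vseq (n + 1))

/-- `G` is a `VZ(S)`-group: every member of `Irr(S | [G,S])` vanishes off `Z(S)`. -/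
def IsVZ (S : SCT G) : Prop :=
  ∀ f ∈ S.IrrRel S.derived, ∀ g : G, g ∉ S.centerSet → f g = 0

end SCT

/-! Supercharacters are orthogonal, and there are as many of them as `S`-classes, so they form
a basis of the `S`-class functions: two elements lie in the same `S`-class as soon as every
supercharacter takes the same value at both. Expanding class indicators in this basis shows
`[G,S] ≤ V(S)`. For `g ∉ V(S)` and `d ∈ [G,S]`, the supercharacters without `[G,S]` in their
kernel vanish at `g` and at `gd`, and the others take the same value there, so `gd ∈ Cl_S(g)`.
Hence a generator `g ∉ V(S)` of `ζ_{i+1}(S)` would force `[G,S] ≤ ζ_i(S)` and so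
`ζ_{i+1}(S) = G`: thus `ζ_{i+1}(S) ≤ V(S)` whenever `ζ_{i+1}(S) ≠ G`, which by minimality of `c`
applies to `i + 1 = c - 1`. -/

open Finset CategoryTheory

theorem IsIrrChar.sum_mul_inv_eq {f f' : G → ℂ} (hf : IsIrrChar G f) (hf' : IsIrrChar G f') :
    ∑ x, f x * f' x⁻¹ = if f = f' then (Nat.card G : ℂ) else 0 := by
  have hcard : (Nat.card G : ℂ) ≠ 0 := Nat.cast_ne_zero.2 Nat.card_pos.ne'
  have : Invertible (Nat.card G : ℂ) := invertibleOfNonzero hcard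
  obtain ⟨V, hV, rfl⟩ := hf
  obtain ⟨W, hW, rfl⟩ := hf'
  by_cases hVW : V.character = W.character
  · have h := FDRep.char_orthonormal V V
    rw [if_pos ⟨Iso.refl V⟩, inv_mul_eq_iff_eq_mul₀ hcard] at h
    simpa [← hVW] using h
  · have h := FDRep.char_orthonormal V W
    rw [if_neg fun ⟨i⟩ => hVW (FDRep.char_iso i), inv_mul_eq_iff_eq_mul₀ hcard] at h
    simpa [hVW] using h

theorem IsIrrChar.exists_apply_one_eq {f : G → ℂ} (hf : IsIrrChar G f) :
    ∃ d : ℕ, 0 < d ∧ f 1 = d := by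
  obtain ⟨V, hV, rfl⟩ := hf
  refine ⟨Module.finrank ℂ V, Nat.pos_of_ne_zero fun h => Simple.not_isZero V ?_,
    FDRep.char_one V⟩
  have : Subsingleton V := Module.finrank_zero_iff.1 h
  rw [Limits.IsZero.iff_id_eq_zero]
  apply Action.hom_ext
  ext v
  exact Subsingleton.elim _ _

namespace SCT

variable (S : SCT G)

theorem isIrrChar_of_mem {X : Finset (G → ℂ)} {χ : G → ℂ} (hX : X ∈ S.parts) (hχ : χ ∈ X) :
    IsIrrChar G χ :=
  (S.parts_cover χ).2 ⟨X, hX, hχ⟩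

theorem mem_cls_iff {g k : G} : k ∈ S.cls g ↔ S.cls k = S.cls g :=
  ⟨S.cls_eq g k, fun h => h ▸ S.mem_cls k⟩

theorem superchar_one_ne_zero {X : Finset (G → ℂ)} (hX : X ∈ S.parts) : S.superchar X 1 ≠ 0 := by
  have hpos : ∀ χ ∈ X, 0 < (χ 1 * χ 1).re := fun χ hχ => by
    obtain ⟨d, hd, hχ1⟩ := (S.isIrrChar_of_mem hX hχ).exists_apply_one_eq
    rw [hχ1, ← Nat.cast_mul, Complex.natCast_re]
    exact_mod_cast Nat.mul_pos hd hd
  have hsum : 0 < (S.superchar X 1).re := by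
    simp only [superchar, Complex.re_sum]
    exact sum_pos hpos (S.parts_nonempty X hX)
  intro h
  simp [h] at hsum

theorem sum_superchar_mul_superchar_inv {X Y : Finset (G → ℂ)} (hX : X ∈ S.parts)
    (hY : Y ∈ S.parts) :
    ∑ x, S.superchar X x * S.superchar Y x⁻¹ =
      if X = Y then Nat.card G * S.superchar X 1 else 0 := by
  calc ∑ x, S.superchar X x * S.superchar Y x⁻¹
      = ∑ χ ∈ X, ∑ χ' ∈ Y, χ 1 * χ' 1 * ∑ x, χ x * χ' x⁻¹ := by
        simp only [superchar, mul_sum, sum_mul]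
        rw [sum_comm_cycle]
        refine sum_congr rfl fun x _ => ?_
        rw [sum_comm]
        exact sum_congr rfl fun χ _ => sum_congr rfl fun χ' _ => by ring
    _ = ∑ χ ∈ X, ∑ χ' ∈ Y, if χ = χ' then Nat.card G * (χ 1 * χ 1) else 0 := by
        refine sum_congr rfl fun χ hχ => sum_congr rfl fun χ' hχ' => ?_
        rw [(S.isIrrChar_of_mem hX hχ).sum_mul_inv_eq (S.isIrrChar_of_mem hY hχ')]
        split_ifs with h
        · rw [h]; ring
        · ring
    _ = Nat.card G * ∑ χ ∈ X ∩ Y, χ 1 * χ 1 := by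
        simp only [sum_ite_eq, ← sum_ite_mem, mul_sum, mul_ite, mul_zero]
    _ = if X = Y then Nat.card G * S.superchar X 1 else 0 := by
        split_ifs with h
        · rw [h, inter_self]; rfl
        · rw [disjoint_iff_inter_eq_empty.1 (S.parts_disj X hX Y hY h), sum_empty, mul_zero]

theorem coeff_mul_card_eq {f : G → ℂ} {a : S.parts → ℂ} (hf : f = ∑ i, a i • S.superchar i)
    (Y : S.parts) {c : ℂ} (hc : ∑ x, f x * S.superchar Y x⁻¹ = c * S.superchar Y 1) :
    a Y * Nat.card G = c := by
  have hpair : ∑ x, f x * S.superchar Y x⁻¹ = a Y * Nat.card G * S.superchar Y 1 :=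
    calc ∑ x, f x * S.superchar Y x⁻¹
        = ∑ i : S.parts, a i * ∑ x, S.superchar i x * S.superchar Y x⁻¹ := by
          simp only [hf, Finset.sum_apply, Pi.smul_apply, smul_eq_mul, sum_mul, mul_sum]
          rw [sum_comm]
          exact sum_congr rfl fun i _ => sum_congr rfl fun x _ => by ring
      _ = a Y * Nat.card G * S.superchar Y 1 := by
          simp only [S.sum_superchar_mul_superchar_inv (Subtype.prop _) Y.2, Subtype.val_inj,
            mul_ite, mul_zero, sum_ite_eq', mem_univ, if_true]
          ring
  exact mul_right_cancel₀ (S.superchar_one_ne_zero Y.2) (hpair.symm.trans hc)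

theorem linearIndependent_superchar :
    LinearIndependent ℂ (fun i : S.parts => S.superchar i) := by
  refine Fintype.linearIndependent_iff.2 fun a ha Y => ?_
  simpa using S.coeff_mul_card_eq ha.symm Y (c := 0) (by simp)

def classFunctions : Submodule ℂ (G → ℂ) where
  carrier := {f | ∀ g k, k ∈ S.cls g → f k = f g}
  add_mem' hf hf' g k hk := by simp only [Pi.add_apply, hf g k hk, hf' g k hk]
  zero_mem' _ _ _ := rfl
  smul_mem' c f hf g k hk := by simp only [Pi.smul_apply, hf g k hk]

theorem superchar_mem_classFunctions {X : Finset (G → ℂ)} (hX : X ∈ S.parts) :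
    S.superchar X ∈ S.classFunctions :=
  fun g k hk => S.const X hX g k hk

theorem indicator_cls_mem_classFunctions (g : G) :
    (S.cls g).indicator 1 ∈ S.classFunctions := by
  intro a k hk
  simp only [Set.indicator, S.mem_cls_iff, S.cls_eq a k hk, Pi.one_apply]

noncomputable def classFunctionsEquiv : S.classFunctions ≃ₗ[ℂ] (Set.range S.cls → ℂ) where
  toFun f K := f.1 K.2.choose
  map_add' _ _ := rfl
  map_smul' _ _ := rfl
  invFun F := ⟨fun g => F ⟨S.cls g, g, rfl⟩,
    fun g k hk => congrArg F (Subtype.ext (S.cls_eq g k hk))⟩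
  left_inv f := Subtype.ext <| funext fun g =>
    (f.2 _ g (S.mem_cls_iff.2 (⟨g, rfl⟩ : ∃ r, S.cls r = S.cls g).choose_spec.symm)).symm
  right_inv F := funext fun K => congrArg F (Subtype.ext K.2.choose_spec)

theorem finrank_classFunctions : Module.finrank ℂ S.classFunctions = S.parts.card := by
  rw [S.classFunctionsEquiv.finrank_eq, Module.finrank_pi, ← Nat.card_eq_fintype_card, S.card_eq]

theorem exists_eq_sum_smul_superchar {f : G → ℂ} (hf : f ∈ S.classFunctions) :
    ∃ a : S.parts → ℂ, f = ∑ i, a i • S.superchar i := by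
  let v : S.parts → S.classFunctions := fun i =>
    ⟨S.superchar i, S.superchar_mem_classFunctions i.2⟩
  have hv : LinearIndependent ℂ v :=
    LinearIndependent.of_comp S.classFunctions.subtype S.linearIndependent_superchar
  have hspan := hv.span_eq_top_of_card_eq_finrank'
    (by rw [Fintype.card_coe, S.finrank_classFunctions])
  have hf' : (⟨f, hf⟩ : S.classFunctions) ∈ Submodule.span ℂ (Set.range v) :=
    hspan ▸ Submodule.mem_top
  obtain ⟨a, ha⟩ := (Submodule.mem_span_range_iff_exists_fun ℂ).1 hf'
  exact ⟨a, by simpa [v, ← Submodule.coe_sum] using (congrArg Subtype.val ha).symm⟩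

theorem mem_cls_of_forall_superchar_eq {g u : G}
    (h : ∀ X ∈ S.parts, S.superchar X u = S.superchar X g) : u ∈ S.cls g := by
  obtain ⟨a, ha⟩ := S.exists_eq_sum_smul_superchar (S.indicator_cls_mem_classFunctions g)
  have hu : (S.cls g).indicator 1 u = (S.cls g).indicator (1 : G → ℂ) g := by
    simp only [ha, Finset.sum_apply, Pi.smul_apply, h _ (Subtype.prop _)]
  by_contra hug
  simp [hug, S.mem_cls g] at hu

theorem coeff_indicator_cls_mul_card {g : G} {a : S.parts → ℂ}
    (ha : (S.cls g).indicator 1 = ∑ i, a i • S.superchar i) {Y : S.parts}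
    (hY : ∀ k ∈ S.cls g, S.superchar Y k⁻¹ = S.superchar Y 1) :
    a Y * Nat.card G = ∑ k, (S.cls g).indicator 1 k := by
  refine S.coeff_mul_card_eq ha Y ?_
  rw [sum_mul]
  refine sum_congr rfl fun k _ => ?_
  by_cases hk : k ∈ S.cls g
  · simp [hk, hY k hk]
  · simp [hk]

theorem sum_superchar_eq_zero {x : G} (hx : x ≠ 1) : ∑ i : S.parts, S.superchar i x = 0 := by
  obtain ⟨a, ha⟩ := S.exists_eq_sum_smul_superchar (S.indicator_cls_mem_classFunctions 1)
  have hsum_one : ∑ k, ({1} : Set G).indicator (1 : G → ℂ) k = 1 := by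
    rw [sum_eq_single 1] <;> simp_all
  have hcoeff : ∀ Y, a Y * Nat.card G = 1 := fun Y => by
    simpa [S.cls_one, hsum_one] using
      S.coeff_indicator_cls_mul_card ha (Y := Y) (by simp [S.cls_one])
  have hsum : ∑ i, a i * S.superchar i x = 0 := by
    simpa [S.cls_one, hx, Finset.sum_apply] using (congrFun ha x).symm
  calc ∑ i : S.parts, S.superchar i x = ∑ i, a i * Nat.card G * S.superchar i x := by
        simp only [hcoeff, one_mul]
    _ = Nat.card G * ∑ i, a i * S.superchar i x := by
        rw [mul_sum]
        exact sum_congr rfl fun _ _ => by ring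
    _ = 0 := by rw [hsum, mul_zero]

theorem inv_mul_mem_derived {g k : G} (hk : k ∈ S.cls g) : g⁻¹ * k ∈ S.derived :=
  Subgroup.subset_closure ⟨g, Subgroup.mem_top g, k, hk, rfl⟩

theorem mem_derived_of_mem_cls {g k : G} (hg : g ∈ S.derived) (hk : k ∈ S.cls g) :
    k ∈ S.derived := by
  simpa using mul_mem hg (S.inv_mul_mem_derived hk)

theorem superchar_eq_zero_of_notMem_VS {g : G} (hg : g ∉ S.VS) {X : Finset (G → ℂ)}
    (hX : X ∈ S.parts) (hker : ¬ S.derived ≤ charKer (S.superchar X)) : S.superchar X g = 0 :=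
  not_not.1 fun h => hg (Subgroup.subset_closure ⟨_, ⟨⟨X, hX, rfl⟩, hker⟩, h⟩)

theorem derived_le_VS : S.derived ≤ S.VS := by
  intro x hx
  by_contra hxV
  have hx1 : x ≠ 1 := by rintro rfl; exact hxV (one_mem _)
  obtain ⟨a, ha⟩ := S.exists_eq_sum_smul_superchar (S.indicator_cls_mem_classFunctions x)
  set m := ∑ k, (S.cls x).indicator (1 : G → ℂ) k
  -- `Cl_S(x) ⊆ [G,S]`, so each coefficient is `m / |G|` or its supercharacter vanishes at `x`;
  -- evaluating the expansion at `x` then gives `1 = (m / |G|) · ∑ σ(x) = 0`.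
  have hterm : ∀ i : S.parts, a i * Nat.card G * S.superchar i x = m * S.superchar i x := by
    intro i
    by_cases hker : S.derived ≤ charKer (S.superchar i)
    · rw [S.coeff_indicator_cls_mul_card ha fun k hk => ?_]
      simpa using hker (inv_mem (S.mem_derived_of_mem_cls hx hk)) 1
    · rw [S.superchar_eq_zero_of_notMem_VS hxV i.2 hker, mul_zero, mul_zero]
  have hone : ∑ i, a i * S.superchar i x = 1 := by
    simpa [S.mem_cls x, Finset.sum_apply] using (congrFun ha x).symm
  have hcard : (Nat.card G : ℂ) = 0 :=
    calc (Nat.card G : ℂ) = Nat.card G * ∑ i, a i * S.superchar i x := by rw [hone, mul_one]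
      _ = ∑ i, a i * Nat.card G * S.superchar i x := by
        rw [mul_sum]
        exact sum_congr rfl fun _ _ => by ring
      _ = m * ∑ i : S.parts, S.superchar i x := by rw [sum_congr rfl fun i _ => hterm i, mul_sum]
      _ = 0 := by rw [S.sum_superchar_eq_zero hx1, mul_zero]
  exact Nat.card_pos.ne' (Nat.cast_eq_zero.1 hcard)

theorem superchar_conj {X : Finset (G → ℂ)} (hX : X ∈ S.parts) (x h : G) :
    S.superchar X (h * x * h⁻¹) = S.superchar X x := by
  refine sum_congr rfl fun χ hχ => ?_
  obtain ⟨V, _, rfl⟩ := S.isIrrChar_of_mem hX hχ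
  rw [FDRep.char_conj]

theorem mul_mem_cls_of_notMem_VS {g d : G} (hg : g ∉ S.VS) (hd : d ∈ S.derived) :
    g * d ∈ S.cls g := by
  have hgd : g * d ∉ S.VS := fun h =>
    hg (by simpa using mul_mem h (inv_mem (S.derived_le_VS hd)))
  refine S.mem_cls_of_forall_superchar_eq fun X hX => ?_
  by_cases hker : S.derived ≤ charKer (S.superchar X)
  · rw [← S.superchar_conj hX (g * d) g⁻¹, show g⁻¹ * (g * d) * g⁻¹⁻¹ = d * g by group]
    exact hker hd g
  · rw [S.superchar_eq_zero_of_notMem_VS hgd hX hker,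
      S.superchar_eq_zero_of_notMem_VS hg hX hker]

theorem zeta_succ_eq_top_of_derived_le {n : ℕ} (h : S.derived ≤ S.zeta n) :
    S.zeta (n + 1) = ⊤ :=
  eq_top_iff.2 fun _ _ => Subgroup.subset_closure fun _ hk => h (S.inv_mul_mem_derived hk)

theorem zeta_succ_le_VS_of_ne_top {n : ℕ} (h : S.zeta (n + 1) ≠ ⊤) : S.zeta (n + 1) ≤ S.VS := by
  refine (Subgroup.closure_le _).2 fun g hg => ?_
  by_contra hgV
  exact h (S.zeta_succ_eq_top_of_derived_le fun d hd => by
    simpa using hg _ (S.mul_mem_cls_of_notMem_VS hgV hd))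

end SCT

theorem zeta_pred_le_VS_general (S : SCT G) (c : ℕ)
    (hmin : ∀ n, S.zeta n = ⊤ → c ≤ n) : S.zeta (c - 1) ≤ S.VS := by
  rcases c with _ | _ | n
  · exact bot_le
  · exact bot_le
  · exact S.zeta_succ_le_VS_of_ne_top fun h => by have := hmin _ h; omega

/-- if `G` is `S`-nilpotent of `S`-nilpotence class `c`
(`c` is the least index with `ζ_c(S) = G`), then `ζ_{c-1}(S) ≤ V(S)`. -/
theorem zeta_pred_le_VS (S : SCT G) (c : ℕ) (hc : S.zeta c = ⊤)
    (hmin : ∀ n, S.zeta n = ⊤ → c ≤ n) : S.zeta (c - 1) ≤ S.VS :=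
  zeta_pred_le_VS_general S c hmin
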